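/- arXiv:2505.02838 — 7 statements merged into one kernel-verified Lean document; each statement's English description precedes it below -/
import Mathlib

section
/- Let A, B : X → X be linear operators. Then for every x ∈ X with ⟨x, x⟩ = 1 one has Δ_x(A)·Δ_x(B) ≥ |⟨Ax, Bx⟩ − ⟨Ax, x⟩⟨Bx, x⟩| (p-adic Heisenberg–Robertson–Schrödinger uncertainty principle, Cauchy–Schwarz form). -/
/-!
Centring `Ax` and `Bx` at `x` turns the right-hand side into the inner product of the two
centred vectors, since `⟨x, x⟩ = 1`; the Cauchy–Schwarz bound for that inner product is the
inequality.
-/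

namespace LinearMap.BilinForm

variable {R M : Type*} [CommRing R] [AddCommGroup M] [Module R M]

def ofSymm (f : M → M → R) (hsymm : ∀ u w, f u w = f w u)
    (hadd : ∀ u w z, f u (w + z) = f u w + f u z)
    (hsmul : ∀ (a : R) (u w : M), f u (a • w) = a * f u w) : LinearMap.BilinForm R M :=
  LinearMap.mk₂ R f (fun u w z => by rw [hsymm, hadd, hsymm z, hsymm z])
    (fun a u w => by rw [hsymm, hsmul, hsymm, smul_eq_mul]) hadd hsmul

theorem apply_sub_smul_sub_smul_of_apply_self_eq_one (β : LinearMap.BilinForm R M) {x : M}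
    (hx : β x x = 1) (u w : M) :
    β (u - β u x • x) (w - β x w • x) = β u w - β u x * β x w := by
  simp only [map_sub, map_smul, LinearMap.sub_apply, LinearMap.smul_apply, smul_eq_mul, hx]
  ring

end LinearMap.BilinForm

theorem padic_HRS_cauchy_schwarz_form_general
    {K X : Type*} [Field K] [AddCommGroup X] [Module K X]
    (v : AbsoluteValue K ℝ)
    (N : X → ℝ)
    (ip : X → X → K)
    (hsymm : ∀ u w : X, ip u w = ip w u)
    (hadd : ∀ u w z : X, ip u (w + z) = ip u w + ip u z)
    (hsmul : ∀ (a : K) (u w : X), ip u (a • w) = a * ip u w)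
    (hcs : ∀ u w : X, v (ip u w) ≤ N u * N w)
    (A B : X →ₗ[K] X) (x : X) (hx : ip x x = 1) :
    N (A x - ip (A x) x • x) * N (B x - ip (B x) x • x) ≥
      v (ip (A x) (B x) - ip (A x) x * ip (B x) x) := by
  let β := LinearMap.BilinForm.ofSymm ip hsymm hadd hsmul
  have hcentred := β.apply_sub_smul_sub_smul_of_apply_self_eq_one hx (A x) (B x)
  rw [ge_iff_le, hsymm (B x) x]
  exact (congrArg v hcentred).symm.trans_le (hcs _ _)

/-- **p-adic Heisenberg–Robertson–Schrödinger uncertainty principle (Cauchy–Schwarz form).**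
For linear operators `A B : X → X` on a p-adic Hilbert space and `x` with `⟨x, x⟩ = 1`,
`Δ_x(A) · Δ_x(B) ≥ |⟨Ax, Bx⟩ − ⟨Ax, x⟩⟨Bx, x⟩|`. -/
theorem padic_HRS_cauchy_schwarz_form
    {K X : Type*} [Field K] [AddCommGroup X] [Module K X]
    (v : AbsoluteValue K ℝ) (hna : IsNonarchimedean v)
    (N : X → ℝ)
    (hN_ultra : ∀ u w : X, N (u + w) ≤ max (N u) (N w))
    (hN_smul : ∀ (a : K) (u : X), N (a • u) = v a * N u)
    (ip : X → X → K)
    (hsymm : ∀ u w : X, ip u w = ip w u)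
    (hadd : ∀ u w z : X, ip u (w + z) = ip u w + ip u z)
    (hsmul : ∀ (a : K) (u w : X), ip u (a • w) = a * ip u w)
    (hcs : ∀ u w : X, v (ip u w) ≤ N u * N w)
    (A B : X →ₗ[K] X) (x : X) (hx : ip x x = 1) :
    N (A x - ip (A x) x • x) * N (B x - ip (B x) x • x) ≥
      v (ip (A x) (B x) - ip (A x) x * ip (B x) x) :=
  padic_HRS_cauchy_schwarz_form_general v N ip hsymm hadd hsmul hcs A B x hx
end

section
/- Let A, B : X → X be self-adjoint linear operators. Then for every x ∈ X with ⟨x, x⟩ = 1 one has Δ_x(A)·Δ_x(B) ≥ |⟨BAx, x⟩ − ⟨Ax, x⟩⟨Bx, x⟩| and Δ_x(A)·Δ_x(B) ≥ |⟨ABx, x⟩ − ⟨Ax, x⟩⟨Bx, x⟩|, and moreover |⟨BAx, x⟩ − ⟨Ax, x⟩⟨Bx, x⟩| = |⟨ABx, x⟩ − ⟨Ax, x⟩⟨Bx, x⟩|. -/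
/-! Writing `a = ⟨Ax, x⟩` and `b = ⟨Bx, x⟩`, the normalisation `⟨x, x⟩ = 1` gives
`⟨Ax - a x, Bx - b x⟩ = ⟨Ax, Bx⟩ - a b`, and self-adjointness identifies both `⟨BAx, x⟩` and
`⟨ABx, x⟩` with `⟨Ax, Bx⟩`. Cauchy–Schwarz applied to the two centred vectors then bounds both
quantities by `Δ_x(A) Δ_x(B)`. -/

theorem ip_sub_right {R X : Type*} [AddCommGroup R] [AddCommGroup X] {ip : X → X → R}
    (hadd : ∀ u w z : X, ip u (w + z) = ip u w + ip u z) (u w z : X) :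
    ip u (w - z) = ip u w - ip u z :=
  (AddMonoidHom.mk' (ip u) (hadd u)).map_sub w z

section SymmetricBilinear

variable {K X : Type*} [CommRing K] [AddCommGroup X] [Module K X] {ip : X → X → K}

theorem ip_sub_smul_left (hsymm : ∀ u w : X, ip u w = ip w u)
    (hadd : ∀ u w z : X, ip u (w + z) = ip u w + ip u z)
    (hsmul : ∀ (a : K) (u w : X), ip u (a • w) = a * ip u w) (a : K) (u x w : X) :
    ip (u - a • x) w = ip u w - a * ip x w := by
  rw [hsymm, ip_sub_right hadd, hsmul, hsymm w u, hsymm w x]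

theorem ip_sub_proj_sub_proj (hsymm : ∀ u w : X, ip u w = ip w u)
    (hadd : ∀ u w z : X, ip u (w + z) = ip u w + ip u z)
    (hsmul : ∀ (a : K) (u w : X), ip u (a • w) = a * ip u w) {x : X} (hx : ip x x = 1)
    (u w : X) :
    ip (u - ip u x • x) (w - ip w x • x) = ip u w - ip u x * ip w x := by
  rw [ip_sub_right hadd, hsmul, ip_sub_smul_left hsymm hadd hsmul,
    ip_sub_smul_left hsymm hadd hsmul, hx, hsymm x w]
  ring

end SymmetricBilinear

theorem padic_HRS_selfadjoint_form_general
    {K X : Type*} [Field K] [AddCommGroup X] [Module K X]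
    (v : AbsoluteValue K ℝ)
    (N : X → ℝ)
    (ip : X → X → K)
    (hsymm : ∀ u w : X, ip u w = ip w u)
    (hadd : ∀ u w z : X, ip u (w + z) = ip u w + ip u z)
    (hsmul : ∀ (a : K) (u w : X), ip u (a • w) = a * ip u w)
    (hcs : ∀ u w : X, v (ip u w) ≤ N u * N w)
    (A B : X →ₗ[K] X)
    (hA : ∀ u w : X, ip (A u) w = ip u (A w))
    (hB : ∀ u w : X, ip (B u) w = ip u (B w))
    (x : X) (hx : ip x x = 1) :
    N (A x - ip (A x) x • x) * N (B x - ip (B x) x • x) ≥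
        v (ip (B (A x)) x - ip (A x) x * ip (B x) x) ∧
    N (A x - ip (A x) x • x) * N (B x - ip (B x) x • x) ≥
        v (ip (A (B x)) x - ip (A x) x * ip (B x) x) ∧
    v (ip (B (A x)) x - ip (A x) x * ip (B x) x) =
        v (ip (A (B x)) x - ip (A x) x * ip (B x) x) := by
  have hBA : ip (B (A x)) x = ip (A x) (B x) := hB (A x) x
  have hAB : ip (A (B x)) x = ip (A x) (B x) := by rw [hA, hsymm]
  have hbound := hcs (A x - ip (A x) x • x) (B x - ip (B x) x • x)
  rw [ip_sub_proj_sub_proj hsymm hadd hsmul hx] at hbound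
  rw [hBA, hAB]
  exact ⟨hbound, hbound, rfl⟩

/-- For self-adjoint `A B`, `Δ_x(A)·Δ_x(B) ≥ |⟨BAx, x⟩ − ⟨Ax, x⟩⟨Bx, x⟩|` and
`Δ_x(A)·Δ_x(B) ≥ |⟨ABx, x⟩ − ⟨Ax, x⟩⟨Bx, x⟩|`, and the two right-hand sides are equal. -/
theorem padic_HRS_selfadjoint_form
    {K X : Type*} [Field K] [AddCommGroup X] [Module K X]
    (v : AbsoluteValue K ℝ) (hna : IsNonarchimedean v)
    (N : X → ℝ)
    (hN_ultra : ∀ u w : X, N (u + w) ≤ max (N u) (N w))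
    (hN_smul : ∀ (a : K) (u : X), N (a • u) = v a * N u)
    (ip : X → X → K)
    (hsymm : ∀ u w : X, ip u w = ip w u)
    (hadd : ∀ u w z : X, ip u (w + z) = ip u w + ip u z)
    (hsmul : ∀ (a : K) (u w : X), ip u (a • w) = a * ip u w)
    (hcs : ∀ u w : X, v (ip u w) ≤ N u * N w)
    (A B : X →ₗ[K] X)
    (hA : ∀ u w : X, ip (A u) w = ip u (A w))
    (hB : ∀ u w : X, ip (B u) w = ip u (B w))
    (x : X) (hx : ip x x = 1) :
    N (A x - ip (A x) x • x) * N (B x - ip (B x) x • x) ≥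
        v (ip (B (A x)) x - ip (A x) x * ip (B x) x) ∧
    N (A x - ip (A x) x • x) * N (B x - ip (B x) x • x) ≥
        v (ip (A (B x)) x - ip (A x) x * ip (B x) x) ∧
    v (ip (B (A x)) x - ip (A x) x * ip (B x) x) =
        v (ip (A (B x)) x - ip (A x) x * ip (B x) x) :=
  padic_HRS_selfadjoint_form_general v N ip hsymm hadd hsmul hcs A B hA hB x hx
end

section
/- Let A, B : X → X be linear operators admitting adjoints A*, B* : X → X (i.e. ⟨Au, v⟩ = ⟨u, A*v⟩ and ⟨Bu, v⟩ = ⟨u, B*v⟩ for all u, v ∈ X). Then for every x ∈ X with ⟨x, x⟩ = 1 one has max{Δ_x(A), Δ_x(B)} ≥ √(|⟨(A*A + B*B)x, x⟩ − (⟨(A+B)x, x⟩² + ⟨(A−B)x, x⟩²)/2|), where the outer |·| is the absolute value of K and √ is the real square root. -/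
/-!
Write `Δ_A = Ax - ⟨Ax, x⟩ x`. Since `⟨x, x⟩ = 1`, `⟨Δ_A, Δ_A⟩ = ⟨Ax, Ax⟩ - ⟨Ax, x⟩² = ⟨A*Ax, x⟩ - ⟨Ax, x⟩²`,
and `((a + b)² + (a - b)²) / 2 = a² + b²`, so the quantity under the square root is
`|⟨Δ_A, Δ_A⟩ + ⟨Δ_B, Δ_B⟩|`. The ultrametric inequality and Cauchy–Schwarz bound it by
`max(‖Δ_A‖, ‖Δ_B‖)²`.
-/

section UltrametricNorm

variable {K X : Type*} [Field K] [AddCommGroup X] [Module K X]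

theorem nonneg_of_le_max_of_map_smul (v : AbsoluteValue K ℝ) {N : X → ℝ}
    (hN_ultra : ∀ u w : X, N (u + w) ≤ max (N u) (N w))
    (hN_smul : ∀ (a : K) (u : X), N (a • u) = v a * N u) (u : X) : 0 ≤ N u := by
  have hN_zero : N 0 = 0 := by simpa using hN_smul 0 u
  have hN_neg : N (-u) = N u := by simpa using hN_smul (-1) u
  simpa [hN_zero, hN_neg] using hN_ultra u (-u)

end UltrametricNorm

namespace LinearMap.BilinForm

variable {K X : Type*} [Field K] [AddCommGroup X] [Module K X]
  {β : LinearMap.BilinForm K X} {x : X}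

/-- `Δ_x(A)` is `N (deviation β A x)`. -/
def deviation (β : LinearMap.BilinForm K X) (A : X →ₗ[K] X) (x : X) : X :=
  A x - β (A x) x • x

theorem IsSymm.apply_sub_smul_self (hβ : β.IsSymm) (hx : β x x = 1) (y : X) :
    β (y - β y x • x) (y - β y x • x) = β y y - β y x ^ 2 := by
  simp only [map_sub, map_smul, LinearMap.sub_apply, LinearMap.smul_apply, smul_eq_mul, hx,
    hβ.eq x y]
  ring

theorem IsSymm.apply_deviation_self (hβ : β.IsSymm) (hx : β x x = 1) {A Astar : X →ₗ[K] X}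
    (hA : ∀ u w : X, β (A u) w = β u (Astar w)) :
    β (deviation β A x) (deviation β A x) = β (Astar (A x)) x - β (A x) x ^ 2 := by
  rw [deviation, hβ.apply_sub_smul_self hx, hβ.eq (Astar _), ← hA]

theorem IsSymm.apply_adjoint_sum_sub_half_sq (hβ : β.IsSymm) (hx : β x x = 1)
    (h2 : (2 : K) ≠ 0) {A B Astar Bstar : X →ₗ[K] X}
    (hA : ∀ u w : X, β (A u) w = β u (Astar w)) (hB : ∀ u w : X, β (B u) w = β u (Bstar w)) :
    β ((Astar ∘ₗ A + Bstar ∘ₗ B) x) x - (β ((A + B) x) x ^ 2 + β ((A - B) x) x ^ 2) / 2 =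
      β (deviation β A x) (deviation β A x) + β (deviation β B x) (deviation β B x) := by
  rw [hβ.apply_deviation_self hx hA, hβ.apply_deviation_self hx hB]
  simp only [LinearMap.add_apply, LinearMap.sub_apply, LinearMap.comp_apply, map_add, map_sub]
  field_simp
  ring

theorem abv_apply_self_add_apply_self_le (v : AbsoluteValue K ℝ) (hna : IsNonarchimedean v)
    {N : X → ℝ} (hN_nonneg : ∀ u : X, 0 ≤ N u) (hcs : ∀ u : X, v (β u u) ≤ N u * N u)
    (u w : X) : v (β u u + β w w) ≤ max (N u) (N w) ^ 2 := by
  have h_sq_le {z : X} (hz : N z ≤ max (N u) (N w)) : v (β z z) ≤ max (N u) (N w) ^ 2 :=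
    (hcs z).trans <| (sq (max (N u) (N w))).symm ▸ mul_self_le_mul_self (hN_nonneg z) hz
  exact (hna _ _).trans (max_le (h_sq_le (le_max_left _ _)) (h_sq_le (le_max_right _ _)))

end LinearMap.BilinForm

open LinearMap.BilinForm in
/-- For adjointable `A B` (adjoints `A*`, `B*`) and `⟨x, x⟩ = 1`, over a field of
characteristic `≠ 2`:
`max{Δ_x(A), Δ_x(B)} ≥ √(|⟨(A*A + B*B)x, x⟩ − (⟨(A+B)x, x⟩² + ⟨(A−B)x, x⟩²)/2|)`. -/
theorem padic_uncertainty_adjoint_sum_form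
    {K X : Type*} [Field K] [AddCommGroup X] [Module K X]
    (v : AbsoluteValue K ℝ) (hna : IsNonarchimedean v)
    (N : X → ℝ)
    (hN_ultra : ∀ u w : X, N (u + w) ≤ max (N u) (N w))
    (hN_smul : ∀ (a : K) (u : X), N (a • u) = v a * N u)
    (ip : X → X → K)
    (hsymm : ∀ u w : X, ip u w = ip w u)
    (hadd : ∀ u w z : X, ip u (w + z) = ip u w + ip u z)
    (hsmul : ∀ (a : K) (u w : X), ip u (a • w) = a * ip u w)
    (hcs : ∀ u w : X, v (ip u w) ≤ N u * N w)
    (h2 : (2 : K) ≠ 0)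
    (A B Astar Bstar : X →ₗ[K] X)
    (hA : ∀ u w : X, ip (A u) w = ip u (Astar w))
    (hB : ∀ u w : X, ip (B u) w = ip u (Bstar w))
    (x : X) (hx : ip x x = 1) :
    max (N (A x - ip (A x) x • x)) (N (B x - ip (B x) x • x)) ≥
      Real.sqrt (v (ip ((Astar ∘ₗ A + Bstar ∘ₗ B) x) x -
        (ip ((A + B) x) x ^ 2 + ip ((A - B) x) x ^ 2) / 2)) := by
  let β : LinearMap.BilinForm K X := LinearMap.mk₂ K ip
    (fun u w z => by rw [hsymm, hadd, hsymm z, hsymm z]) (fun a u w => by rw [hsymm, hsmul, hsymm]; rfl)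
    hadd hsmul
  have hβ : β.IsSymm := ⟨hsymm⟩
  have hN_nonneg := nonneg_of_le_max_of_map_smul v hN_ultra hN_smul
  change Real.sqrt (v (β ((Astar ∘ₗ A + Bstar ∘ₗ B) x) x -
      (β ((A + B) x) x ^ 2 + β ((A - B) x) x ^ 2) / 2)) ≤
    max (N (deviation β A x)) (N (deviation β B x))
  rw [hβ.apply_adjoint_sum_sub_half_sq hx h2 hA hB,
    Real.sqrt_le_left (le_max_of_le_left (hN_nonneg _))]
  exact abv_apply_self_add_apply_self_le v hna hN_nonneg (fun u => hcs u u) _ _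
end

section
/- Let A, B : X → X be self-adjoint linear operators. Then for every x ∈ X with ⟨x, x⟩ = 1 one has max{Δ_x(A), Δ_x(B)} ≥ √(|⟨(A² − B²)x, x⟩ − ⟨(A+B)x, x⟩·⟨(A−B)x, x⟩|), where the outer |·| is the absolute value of K and √ is the real square root. -/
/-!
Write `u = Ax - ⟨Ax, x⟩x` and `w = Bx - ⟨Bx, x⟩x`, so that `Δ_x(A) = ‖u‖` and `Δ_x(B) = ‖w‖`.
Since `⟨x, x⟩ = 1`, `⟨u, u⟩ = ⟨Ax, Ax⟩ - ⟨Ax, x⟩²`, and self-adjointness turns `⟨A²x, x⟩` into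
`⟨Ax, Ax⟩`; hence the quantity under the square root is `|⟨u, u⟩ - ⟨w, w⟩|`. The ultrametric
inequality and Cauchy–Schwarz bound it by `max(‖u‖², ‖w‖²)`.
-/

namespace LinearMap.BilinForm

variable {R M : Type*} [CommRing R] [AddCommGroup M] [Module R M]

def mkOfSymm (ip : M → M → R) (hsymm : ∀ u w, ip u w = ip w u)
    (hadd : ∀ u w z, ip u (w + z) = ip u w + ip u z)
    (hsmul : ∀ (a : R) (u w : M), ip u (a • w) = a * ip u w) : LinearMap.BilinForm R M :=
  LinearMap.mk₂ R ip
    (fun u w z => by rw [hsymm, hadd, hsymm z u, hsymm z w])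
    (fun a u w => by rw [hsymm, hsmul, hsymm w u]; rfl)
    hadd hsmul

theorem isSymm_mkOfSymm (ip : M → M → R) (hsymm : ∀ u w, ip u w = ip w u)
    (hadd : ∀ u w z, ip u (w + z) = ip u w + ip u z)
    (hsmul : ∀ (a : R) (u w : M), ip u (a • w) = a * ip u w) :
    (mkOfSymm ip hsymm hadd hsmul).IsSymm :=
  ⟨hsymm⟩

variable {β : LinearMap.BilinForm R M} {x : M}

theorem apply_sub_smul_self_self (hβ : β.IsSymm) (hx : β x x = 1) (y : M) :
    β (y - β y x • x) (y - β y x • x) = β y y - β y x ^ 2 := by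
  have hxy : β x y = β y x := hβ.eq x y
  simp only [map_sub, map_smul, LinearMap.sub_apply, LinearMap.smul_apply, smul_eq_mul, hx, hxy]
  ring

theorem apply_sq_sub_sq_sub_mul (hβ : β.IsSymm) (hx : β x x = 1) {A B : Module.End R M}
    (hA : β.IsSelfAdjoint A) (hB : β.IsSelfAdjoint B) :
    β ((A ∘ₗ A - B ∘ₗ B) x) x - β ((A + B) x) x * β ((A - B) x) x =
      β (A x - β (A x) x • x) (A x - β (A x) x • x) -
        β (B x - β (B x) x • x) (B x - β (B x) x • x) := by
  rw [apply_sub_smul_self_self hβ hx, apply_sub_smul_self_self hβ hx]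
  simp only [LinearMap.sub_apply, LinearMap.add_apply, LinearMap.comp_apply, map_add, map_sub,
    hA (A x) x, hB (B x) x]
  ring

end LinearMap.BilinForm

theorem IsNonarchimedean.nonneg_of_map_smul {R M : Type*} [Ring R] [AddCommGroup M] [Module R M]
    {N : M → ℝ} (hN : IsNonarchimedean N) (v : AbsoluteValue R ℝ)
    (hN_smul : ∀ (a : R) (u : M), N (a • u) = v a * N u) (z : M) : 0 ≤ N z := by
  have hN_zero : N 0 = 0 := by simpa using hN_smul 0 z
  have hN_neg : N (-z) = N z := by
    rw [← neg_one_smul R z, hN_smul, v.map_neg, ← hN_smul, one_smul]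
  simpa [hN_zero, hN_neg] using hN z (-z)

theorem IsNonarchimedean.sqrt_sub_le_max {R M : Type*} [Ring R] {v : AbsoluteValue R ℝ}
    (hv : IsNonarchimedean v) {N : M → ℝ} (hN : ∀ z, 0 ≤ N z) {ip : M → M → R}
    (hcs : ∀ u w, v (ip u w) ≤ N u * N w) (u w : M) :
    √(v (ip u u - ip w w)) ≤ max (N u) (N w) := by
  have hsq_le (z : M) (hz : N z ≤ max (N u) (N w)) : N z * N z ≤ max (N u) (N w) ^ 2 := by
    rw [sq]; exact mul_self_le_mul_self (hN z) hz
  refine Real.sqrt_le_iff.mpr ⟨(hN u).trans (le_max_left _ _), ?_⟩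
  calc v (ip u u - ip w w) ≤ max (v (ip u u)) (v (ip w w)) := by
        simpa only [sub_eq_add_neg, v.map_neg] using hv (ip u u) (-ip w w)
    _ ≤ max (N u * N u) (N w * N w) := max_le_max (hcs u u) (hcs w w)
    _ ≤ max (N u) (N w) ^ 2 :=
        max_le (hsq_le u (le_max_left _ _)) (hsq_le w (le_max_right _ _))

/-- For self-adjoint `A B` and `⟨x, x⟩ = 1`:
`max{Δ_x(A), Δ_x(B)} ≥ √(|⟨(A² − B²)x, x⟩ − ⟨(A+B)x, x⟩·⟨(A−B)x, x⟩|)`. -/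
theorem padic_uncertainty_selfadjoint_difference_form
    {K X : Type*} [Field K] [AddCommGroup X] [Module K X]
    (v : AbsoluteValue K ℝ) (hna : IsNonarchimedean v)
    (N : X → ℝ)
    (hN_ultra : ∀ u w : X, N (u + w) ≤ max (N u) (N w))
    (hN_smul : ∀ (a : K) (u : X), N (a • u) = v a * N u)
    (ip : X → X → K)
    (hsymm : ∀ u w : X, ip u w = ip w u)
    (hadd : ∀ u w z : X, ip u (w + z) = ip u w + ip u z)
    (hsmul : ∀ (a : K) (u w : X), ip u (a • w) = a * ip u w)
    (hcs : ∀ u w : X, v (ip u w) ≤ N u * N w)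
    (A B : X →ₗ[K] X)
    (hA : ∀ u w : X, ip (A u) w = ip u (A w))
    (hB : ∀ u w : X, ip (B u) w = ip u (B w))
    (x : X) (hx : ip x x = 1) :
    max (N (A x - ip (A x) x • x)) (N (B x - ip (B x) x • x)) ≥
      Real.sqrt (v (ip ((A ∘ₗ A - B ∘ₗ B) x) x -
        ip ((A + B) x) x * ip ((A - B) x) x)) := by
  let β := LinearMap.BilinForm.mkOfSymm ip hsymm hadd hsmul
  have hβ : β.IsSymm := LinearMap.BilinForm.isSymm_mkOfSymm ip hsymm hadd hsmul
  change √(v (β ((A ∘ₗ A - B ∘ₗ B) x) x - β ((A + B) x) x * β ((A - B) x) x)) ≤ _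
  rw [LinearMap.BilinForm.apply_sq_sub_sq_sub_mul hβ hx hA hB]
  exact hna.sqrt_sub_le_max (IsNonarchimedean.nonneg_of_map_smul hN_ultra v hN_smul) hcs _ _
end

section
/- Let A, B : X → X be linear operators. Then for every x ∈ X with ⟨x, x⟩ = 1 one has max{Δ_x(A), Δ_x(B)} ≥ √(|⟨(A+B)x, (A+B)x⟩ − ⟨(A+B)x, x⟩²|), where the outer |·| is the absolute value of K and √ is the real square root. -/
/-!
Write `y = (A + B) x` and `z = y - ⟨y, x⟩ x`. Since `⟨x, x⟩ = 1`, `z` is orthogonal to `x` and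
`⟨z, z⟩ = ⟨y, y⟩ - ⟨y, x⟩²`, so Cauchy–Schwarz gives `√|⟨y, y⟩ - ⟨y, x⟩²| ≤ ‖z‖`. By linearity
`z = (A x - ⟨A x, x⟩ x) + (B x - ⟨B x, x⟩ x)`, and the ultrametric inequality bounds `‖z‖` by
`max (Δ_x A) (Δ_x B)`.
-/

section Ultrametric

variable {K X : Type*} [Ring K] [Nontrivial K] [AddCommGroup X] [Module K X]

theorem nonneg_of_ultrametric (v : AbsoluteValue K ℝ) (N : X → ℝ)
    (hN_ultra : ∀ u w : X, N (u + w) ≤ max (N u) (N w))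
    (hN_smul : ∀ (a : K) (u : X), N (a • u) = v a * N u) (z : X) : 0 ≤ N z := by
  have hN_zero : N 0 = 0 := by simpa using hN_smul 0 0
  have hN_neg : N (-z) = N z := by simpa using hN_smul (-1) z
  simpa [hN_zero, hN_neg] using hN_ultra z (-z)

end Ultrametric

section BilinForm

variable {K X : Type*} [CommRing K] [AddCommGroup X] [Module K X]

def bilinFormOfSymm (ip : X → X → K) (hsymm : ∀ u w : X, ip u w = ip w u)
    (hadd : ∀ u w z : X, ip u (w + z) = ip u w + ip u z)
    (hsmul : ∀ (a : K) (u w : X), ip u (a • w) = a * ip u w) : LinearMap.BilinForm K X :=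
  LinearMap.mk₂ K ip
    (fun u w z => by rw [hsymm, hadd, hsymm z, hsymm z])
    (fun a u w => by rw [hsymm, hsmul, hsymm, smul_eq_mul])
    hadd hsmul

theorem bilinForm_sub_proj_self {β : LinearMap.BilinForm K X} {x : X} (hx : β x x = 1)
    (hsymm : ∀ u w : X, β u w = β w u) (y : X) :
    β (y - β y x • x) (y - β y x • x) = β y y - β y x ^ 2 := by
  simp only [map_sub, map_smul, LinearMap.sub_apply, LinearMap.smul_apply, smul_eq_mul, hx,
    hsymm x y]
  ring

end BilinForm

theorem padic_uncertainty_sum_inner_form_general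
    {K X : Type*} [Field K] [AddCommGroup X] [Module K X]
    (v : AbsoluteValue K ℝ)
    (N : X → ℝ)
    (hN_ultra : ∀ u w : X, N (u + w) ≤ max (N u) (N w))
    (hN_smul : ∀ (a : K) (u : X), N (a • u) = v a * N u)
    (ip : X → X → K)
    (hsymm : ∀ u w : X, ip u w = ip w u)
    (hadd : ∀ u w z : X, ip u (w + z) = ip u w + ip u z)
    (hsmul : ∀ (a : K) (u w : X), ip u (a • w) = a * ip u w)
    (hcs : ∀ u w : X, v (ip u w) ≤ N u * N w)
    (A B : X →ₗ[K] X)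
    (x : X) (hx : ip x x = 1) :
    max (N (A x - ip (A x) x • x)) (N (B x - ip (B x) x • x)) ≥
      Real.sqrt (v (ip ((A + B) x) ((A + B) x) - ip ((A + B) x) x ^ 2)) := by
  set β := bilinFormOfSymm ip hsymm hadd hsmul
  change max (N (A x - β (A x) x • x)) (N (B x - β (B x) x • x)) ≥
    Real.sqrt (v (β ((A + B) x) ((A + B) x) - β ((A + B) x) x ^ 2))
  set z := (A + B) x - β ((A + B) x) x • x
  have hz : z = (A x - β (A x) x • x) + (B x - β (B x) x • x) := by
    simp only [z, LinearMap.add_apply, map_add, add_smul]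
    abel
  have hz_nonneg : 0 ≤ N z := nonneg_of_ultrametric v N hN_ultra hN_smul z
  calc Real.sqrt (v (β ((A + B) x) ((A + B) x) - β ((A + B) x) x ^ 2))
      = Real.sqrt (v (β z z)) := by rw [bilinForm_sub_proj_self hx hsymm]
    _ ≤ N z := (Real.sqrt_le_left hz_nonneg).2 (by rw [sq]; exact hcs z z)
    _ ≤ _ := hz ▸ hN_ultra _ _

/-- For linear operators `A B` and `⟨x, x⟩ = 1`:
`max{Δ_x(A), Δ_x(B)} ≥ √(|⟨(A+B)x, (A+B)x⟩ − ⟨(A+B)x, x⟩²|)`. -/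
theorem padic_uncertainty_sum_inner_form
    {K X : Type*} [Field K] [AddCommGroup X] [Module K X]
    (v : AbsoluteValue K ℝ) (hna : IsNonarchimedean v)
    (N : X → ℝ)
    (hN_ultra : ∀ u w : X, N (u + w) ≤ max (N u) (N w))
    (hN_smul : ∀ (a : K) (u : X), N (a • u) = v a * N u)
    (ip : X → X → K)
    (hsymm : ∀ u w : X, ip u w = ip w u)
    (hadd : ∀ u w z : X, ip u (w + z) = ip u w + ip u z)
    (hsmul : ∀ (a : K) (u w : X), ip u (a • w) = a * ip u w)
    (hcs : ∀ u w : X, v (ip u w) ≤ N u * N w)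
    (A B : X →ₗ[K] X)
    (x : X) (hx : ip x x = 1) :
    max (N (A x - ip (A x) x • x)) (N (B x - ip (B x) x • x)) ≥
      Real.sqrt (v (ip ((A + B) x) ((A + B) x) - ip ((A + B) x) x ^ 2)) :=
  padic_uncertainty_sum_inner_form_general v N hN_ultra hN_smul ip hsymm hadd hsmul hcs A B x hx
end

section
/- (p-adic Maccone–Pati uncertainty principle, difference form) Let A, B : X → X be linear operators. Then for every x ∈ X with ⟨x, x⟩ = 1 and every y ∈ X with ‖y‖ ≤ 1 and ⟨x, y⟩ = 0, one has max{Δ_x(A), Δ_x(B)} ≥ |⟨(A−B)x, y⟩|. -/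
/-! The projection `u - ⟨u, x⟩ x` only removes a multiple of `x`, so for `y ⊥ x` it has the same
pairing with `y` as `u`; Cauchy–Schwarz with `‖y‖ ≤ 1` then bounds `|⟨u, y⟩|` by the uncertainty
of `u`. Applying this to `Ax` and `Bx` and using the ultrametric inequality for
`⟨Ax, y⟩ - ⟨Bx, y⟩` gives the claim. -/

theorem pairing_sub_right {X G : Type*} [AddGroup X] [AddGroup G] {ip : X → X → G}
    (hadd : ∀ u w z : X, ip u (w + z) = ip u w + ip u z) (u w z : X) :
    ip u (w - z) = ip u w - ip u z :=
  eq_sub_of_add_eq (by rw [← hadd, sub_add_cancel])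

theorem pairing_sub_smul_left_of_orthogonal {K X : Type*} [Ring K] [AddCommGroup X] [Module K X]
    {ip : X → X → K} (hsymm : ∀ u w : X, ip u w = ip w u)
    (hadd : ∀ u w z : X, ip u (w + z) = ip u w + ip u z)
    (hsmul : ∀ (a : K) (u w : X), ip u (a • w) = a * ip u w)
    {x y : X} (hxy : ip x y = 0) (u : X) (a : K) :
    ip (u - a • x) y = ip u y := by
  rw [hsymm, pairing_sub_right hadd, hsmul, hsymm y u, hsymm y x, hxy, mul_zero, sub_zero]

section AbsoluteValue

variable {K X : Type*} [Field K] [AddCommGroup X] [Module K X] (v : AbsoluteValue K ℝ) {N : X → ℝ}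

-- `0 = N 0 ≤ max (N u) (N (-u)) = N u`
theorem nonneg_of_isNonarchimedean_of_map_smul (hN_ultra : IsNonarchimedean N)
    (hN_smul : ∀ (a : K) (u : X), N (a • u) = v a * N u) (u : X) : 0 ≤ N u := by
  have hN_zero : N 0 = 0 := by simpa using hN_smul 0 0
  have hN_neg : N (-u) = N u := by simpa using hN_smul (-1) u
  simpa [hN_zero, hN_neg] using hN_ultra u (-u)

theorem abv_pairing_le_of_orthogonal {ip : X → X → K}
    (hN_ultra : IsNonarchimedean N) (hN_smul : ∀ (a : K) (u : X), N (a • u) = v a * N u)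
    (hsymm : ∀ u w : X, ip u w = ip w u)
    (hadd : ∀ u w z : X, ip u (w + z) = ip u w + ip u z)
    (hsmul : ∀ (a : K) (u w : X), ip u (a • w) = a * ip u w)
    (hcs : ∀ u w : X, v (ip u w) ≤ N u * N w)
    {x y : X} (hy : N y ≤ 1) (hxy : ip x y = 0) (u : X) (a : K) :
    v (ip u y) ≤ N (u - a • x) :=
  calc v (ip u y) = v (ip (u - a • x) y) := by
        rw [pairing_sub_smul_left_of_orthogonal hsymm hadd hsmul hxy]
    _ ≤ N (u - a • x) * N y := hcs _ _
    _ ≤ N (u - a • x) :=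
        mul_le_of_le_one_right (nonneg_of_isNonarchimedean_of_map_smul v hN_ultra hN_smul _) hy

end AbsoluteValue

theorem padic_maccone_pati_difference_general
    {K X : Type*} [Field K] [AddCommGroup X] [Module K X]
    (v : AbsoluteValue K ℝ) (hna : IsNonarchimedean v)
    (N : X → ℝ)
    (hN_ultra : ∀ u w : X, N (u + w) ≤ max (N u) (N w))
    (hN_smul : ∀ (a : K) (u : X), N (a • u) = v a * N u)
    (ip : X → X → K)
    (hsymm : ∀ u w : X, ip u w = ip w u)
    (hadd : ∀ u w z : X, ip u (w + z) = ip u w + ip u z)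
    (hsmul : ∀ (a : K) (u w : X), ip u (a • w) = a * ip u w)
    (hcs : ∀ u w : X, v (ip u w) ≤ N u * N w)
    (A B : X →ₗ[K] X)
    (x : X)
    (y : X) (hy : N y ≤ 1) (hxy : ip x y = 0) :
    max (N (A x - ip (A x) x • x)) (N (B x - ip (B x) x • x)) ≥
      v (ip ((A - B) x) y) := by
  have bound (u : X) : v (ip u y) ≤ N (u - ip u x • x) :=
    abv_pairing_le_of_orthogonal v hN_ultra hN_smul hsymm hadd hsmul hcs hy hxy u _
  have hsplit : ip ((A - B) x) y = ip (A x) y + -ip (B x) y := by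
    rw [LinearMap.sub_apply, hsymm, pairing_sub_right hadd, hsymm y, hsymm y, sub_eq_add_neg]
  calc v (ip ((A - B) x) y)
      ≤ max (v (ip (A x) y)) (v (-ip (B x) y)) := hsplit ▸ hna _ _
    _ = max (v (ip (A x) y)) (v (ip (B x) y)) := by rw [AbsoluteValue.map_neg]
    _ ≤ _ := max_le_max (bound (A x)) (bound (B x))

/-- **p-adic Maccone–Pati uncertainty principle (difference form).**
For linear operators `A B`, `⟨x, x⟩ = 1`, and any `y` with `‖y‖ ≤ 1` and `⟨x, y⟩ = 0`:
`max{Δ_x(A), Δ_x(B)} ≥ |⟨(A−B)x, y⟩|`. -/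
theorem padic_maccone_pati_difference
    {K X : Type*} [Field K] [AddCommGroup X] [Module K X]
    (v : AbsoluteValue K ℝ) (hna : IsNonarchimedean v)
    (N : X → ℝ)
    (hN_ultra : ∀ u w : X, N (u + w) ≤ max (N u) (N w))
    (hN_smul : ∀ (a : K) (u : X), N (a • u) = v a * N u)
    (ip : X → X → K)
    (hsymm : ∀ u w : X, ip u w = ip w u)
    (hadd : ∀ u w z : X, ip u (w + z) = ip u w + ip u z)
    (hsmul : ∀ (a : K) (u w : X), ip u (a • w) = a * ip u w)
    (hcs : ∀ u w : X, v (ip u w) ≤ N u * N w)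
    (A B : X →ₗ[K] X)
    (x : X) (hx : ip x x = 1)
    (y : X) (hy : N y ≤ 1) (hxy : ip x y = 0) :
    max (N (A x - ip (A x) x • x)) (N (B x - ip (B x) x • x)) ≥
      v (ip ((A - B) x) y) :=
  padic_maccone_pati_difference_general v hna N hN_ultra hN_smul ip hsymm hadd hsmul hcs A B x y hy
    hxy
end

section
/- Let A : X → X be a linear operator. Then for every x ∈ X with ⟨x, x⟩ = 1 one has Δ_x(A) ≥ √(|⟨Ax, Ax⟩ − ⟨Ax, x⟩²|), where the outer |·| is the absolute value of K and √ is the real square root. -/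
/-!
Put `d := Ax − ⟨Ax, x⟩ x`. Since `⟨x, x⟩ = 1`, expanding the bilinear form gives
`⟨d, d⟩ = ⟨Ax, Ax⟩ − ⟨Ax, x⟩²`, and Cauchy–Schwarz bounds `|⟨d, d⟩|` by `‖d‖²`.
Since `0 = N 0 ≤ max (N u) (N (-u)) = N u`, the norm is nonnegative, so taking square roots gives `√|⟨d, d⟩| ≤ ‖d‖ = Δ_x(A)`.
-/

section Ultrametric

variable {K X : Type*} [Ring K] [Nontrivial K] [AddCommGroup X] [Module K X]

theorem nonneg_of_ultrametric_of_smul (v : AbsoluteValue K ℝ) (N : X → ℝ)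
    (hN_ultra : ∀ u w : X, N (u + w) ≤ max (N u) (N w))
    (hN_smul : ∀ (a : K) (u : X), N (a • u) = v a * N u) (u : X) : 0 ≤ N u := by
  have hN_zero : N 0 = 0 := by simpa using hN_smul 0 0
  have hN_neg : N (-u) = N u := by simpa using hN_smul (-1) u
  simpa [hN_zero, hN_neg] using hN_ultra u (-u)

end Ultrametric

section BilinearForm

variable {K X : Type*} [CommRing K] [AddCommGroup X] [Module K X] (ip : X → X → K)

theorem ip_add_smul_left (hsymm : ∀ u w : X, ip u w = ip w u)
    (hadd : ∀ u w z : X, ip u (w + z) = ip u w + ip u z)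
    (hsmul : ∀ (a : K) (u w : X), ip u (a • w) = a * ip u w) (a : K) (u w z : X) :
    ip (u + a • w) z = ip u z + a * ip w z := by
  rw [hsymm, hadd, hsmul, hsymm z u, hsymm z w]

theorem ip_sub_ip_smul_self (hsymm : ∀ u w : X, ip u w = ip w u)
    (hadd : ∀ u w z : X, ip u (w + z) = ip u w + ip u z)
    (hsmul : ∀ (a : K) (u w : X), ip u (a • w) = a * ip u w)
    {x : X} (hx : ip x x = 1) (y : X) :
    ip (y - ip y x • x) (y - ip y x • x) = ip y y - ip y x ^ 2 := by
  rw [sub_eq_add_neg, ← neg_smul, hadd, hsmul, ip_add_smul_left ip hsymm hadd hsmul,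
    ip_add_smul_left ip hsymm hadd hsmul, hsymm x y, hx]
  ring

end BilinearForm

theorem sqrt_abv_ip_self_le {K X : Type*} [Semiring K] (v : AbsoluteValue K ℝ) (N : X → ℝ)
    (hN_nonneg : ∀ u, 0 ≤ N u) (ip : X → X → K) (hcs : ∀ u w : X, v (ip u w) ≤ N u * N w)
    (u : X) : Real.sqrt (v (ip u u)) ≤ N u :=
  (Real.sqrt_le_left (hN_nonneg u)).2 ((hcs u u).trans_eq (sq (N u)).symm)

theorem padic_uncertainty_single_operator_lower_bound_general
    {K X : Type*} [Field K] [AddCommGroup X] [Module K X]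
    (v : AbsoluteValue K ℝ)
    (N : X → ℝ)
    (hN_ultra : ∀ u w : X, N (u + w) ≤ max (N u) (N w))
    (hN_smul : ∀ (a : K) (u : X), N (a • u) = v a * N u)
    (ip : X → X → K)
    (hsymm : ∀ u w : X, ip u w = ip w u)
    (hadd : ∀ u w z : X, ip u (w + z) = ip u w + ip u z)
    (hsmul : ∀ (a : K) (u w : X), ip u (a • w) = a * ip u w)
    (hcs : ∀ u w : X, v (ip u w) ≤ N u * N w)
    (A : X →ₗ[K] X)
    (x : X) (hx : ip x x = 1) :
    N (A x - ip (A x) x • x) ≥ Real.sqrt (v (ip (A x) (A x) - ip (A x) x ^ 2)) := by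
  rw [← ip_sub_ip_smul_self ip hsymm hadd hsmul hx]
  exact sqrt_abv_ip_self_le v N (nonneg_of_ultrametric_of_smul v N hN_ultra hN_smul) ip hcs _

/-- For a linear operator `A` and `⟨x, x⟩ = 1`: `Δ_x(A) ≥ √(|⟨Ax, Ax⟩ − ⟨Ax, x⟩²|)`. -/
theorem padic_uncertainty_single_operator_lower_bound
    {K X : Type*} [Field K] [AddCommGroup X] [Module K X]
    (v : AbsoluteValue K ℝ) (hna : IsNonarchimedean v)
    (N : X → ℝ)
    (hN_ultra : ∀ u w : X, N (u + w) ≤ max (N u) (N w))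
    (hN_smul : ∀ (a : K) (u : X), N (a • u) = v a * N u)
    (ip : X → X → K)
    (hsymm : ∀ u w : X, ip u w = ip w u)
    (hadd : ∀ u w z : X, ip u (w + z) = ip u w + ip u z)
    (hsmul : ∀ (a : K) (u w : X), ip u (a • w) = a * ip u w)
    (hcs : ∀ u w : X, v (ip u w) ≤ N u * N w)
    (A : X →ₗ[K] X)
    (x : X) (hx : ip x x = 1) :
    N (A x - ip (A x) x • x) ≥ Real.sqrt (v (ip (A x) (A x) - ip (A x) x ^ 2)) :=
  padic_uncertainty_single_operator_lower_bound_general v N hN_ultra hN_smul ip hsymm hadd hsmul hcs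
    A x hx
end
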